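/- arXiv:1310.2846 — 6 statements merged into one kernel-verified Lean document; each statement's English description precedes it below -/
import Mathlib

section
/- Let α ∈ {0, 1, −1}, β ∈ {0, 1}, and let φ : ℝ → ℝ be an arbitrary smooth function. Define the vector fields on ℝ³ (coordinates (t,x,u)): L_0 = ∂_t, L_1 = e^{-t}(∂_t + ∂_x), and L_{-1} = e^{t}(1 + α e^{-2x}) ∂_t + e^{t}(−1 + φ(u) e^{-x} + α e^{-2x}) ∂_x + β e^{t−x} ∂_u. Then [L_0, L_1] = −L_1, [L_0, L_{-1}] = L_{-1}, and [L_1, L_{-1}] = 2 L_0. (This is the second realization of the sl(2,ℝ)-subalgebra in Lemma 1.) -/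
noncomputable section

/-- Partial derivative of `f : ℝ³ → ℝ` (curried) in the first variable `t`. -/
def pt (f : ℝ → ℝ → ℝ → ℝ) (t x u : ℝ) : ℝ := deriv (fun s => f s x u) t

/-- Partial derivative in the second variable `x`. -/
def px (f : ℝ → ℝ → ℝ → ℝ) (t x u : ℝ) : ℝ := deriv (fun s => f t s u) x

/-- Partial derivative in the third variable `u`. -/
def pu (f : ℝ → ℝ → ℝ → ℝ) (t x u : ℝ) : ℝ := deriv (fun s => f t x s) u

/-- A vector field `τ ∂_t + ξ ∂_x + η ∂_u` on ℝ³ with coordinates `(t,x,u)`. -/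
structure VF3 where
  tau : ℝ → ℝ → ℝ → ℝ
  xi  : ℝ → ℝ → ℝ → ℝ
  eta : ℝ → ℝ → ℝ → ℝ

/-- Action of a vector field on a function: `X(F) = τ F_t + ξ F_x + η F_u`. -/
def VF3.app (X : VF3) (F : ℝ → ℝ → ℝ → ℝ) (t x u : ℝ) : ℝ :=
  X.tau t x u * pt F t x u + X.xi t x u * px F t x u + X.eta t x u * pu F t x u

/-- Lie bracket of vector fields on ℝ³. -/
def VF3.bracket (X Y : VF3) : VF3 where
  tau := fun t x u => X.app Y.tau t x u - Y.app X.tau t x u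
  xi  := fun t x u => X.app Y.xi t x u - Y.app X.xi t x u
  eta := fun t x u => X.app Y.eta t x u - Y.app X.eta t x u

/-- Scalar multiple of a vector field. -/
def VF3.smul (c : ℝ) (X : VF3) : VF3 where
  tau := fun t x u => c * X.tau t x u
  xi  := fun t x u => c * X.xi t x u
  eta := fun t x u => c * X.eta t x u

/-- Smoothness of a coefficient function on ℝ³. -/
def Smooth3 (f : ℝ → ℝ → ℝ → ℝ) : Prop :=
  ContDiff ℝ (⊤ : ℕ∞) fun p : ℝ × ℝ × ℝ => f p.1 p.2.1 p.2.2

set_option linter.unnecessarySimpa false in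
lemma hd_exp_lin (a b t : ℝ) :
    HasDerivAt (fun s : ℝ => Real.exp (a*s+b)) (a * Real.exp (a*t+b)) t := by
  have h : HasDerivAt (fun s : ℝ => a*s+b) a t := by
    simpa using ((hasDerivAt_id t).const_mul a).add_const b
  simpa [mul_comm, Function.comp_def] using (Real.hasDerivAt_exp (a*t+b)).comp t h

lemma d_exp_neg (t : ℝ) : deriv (fun s : ℝ => Real.exp (-s)) t = -Real.exp (-t) := by
  have := (hd_exp_lin (-1) 0 t).deriv
  simpa using this

lemma d_exp_mul (c t : ℝ) : deriv (fun s : ℝ => Real.exp s * c) t = Real.exp t * c :=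
  ((Real.hasDerivAt_exp t).mul_const c).deriv

lemma hd_exp_neg2 (x : ℝ) :
    HasDerivAt (fun s : ℝ => Real.exp (-2*s)) (-2 * Real.exp (-2*x)) x := by
  simpa using hd_exp_lin (-2) 0 x

lemma d_tau_x (c a x : ℝ) :
    deriv (fun s : ℝ => c * (1 + a * Real.exp (-2*s))) x
      = c * (a * (-2 * Real.exp (-2*x))) := by
  exact (((((hd_exp_neg2 x).const_mul a)).const_add 1).const_mul c).deriv

lemma d_xi_x (c a p x : ℝ) :
    deriv (fun s : ℝ => c * (-1 + p * Real.exp (-s) + a * Real.exp (-2*s))) x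
      = c * (p * (-Real.exp (-x)) + a * (-2 * Real.exp (-2*x))) := by
  have h1 : HasDerivAt (fun s : ℝ => Real.exp (-s)) (-Real.exp (-x)) x := by
    simpa using hd_exp_lin (-1) 0 x
  exact ((((h1.const_mul p).const_add (-1)).add ((hd_exp_neg2 x).const_mul a)).const_mul c).deriv

lemma d_eta_t (b x t : ℝ) :
    deriv (fun s : ℝ => b * Real.exp (s - x)) t = b * Real.exp (t - x) := by
  have := ((hd_exp_lin 1 (-x) t).const_mul b).deriv
  simpa [sub_eq_add_neg, mul_comm] using this

lemma d_eta_x (b t x : ℝ) :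
    deriv (fun s : ℝ => b * Real.exp (t - s)) x = -(b * Real.exp (t - x)) := by
  have := ((hd_exp_lin (-1) t x).const_mul b).deriv
  have e : ∀ s : ℝ, (-1)*s + t = t - s := fun s => by ring
  simp only [e] at this
  rw [this]; ring


/-- Lemma 1, second realization of `sl(2,ℝ)`:
`L₀ = ∂_t`, `L₁ = e^{-t}(∂_t + ∂_x)`,
`L₋₁ = e^t(1 + α e^{-2x}) ∂_t + e^t(-1 + φ(u) e^{-x} + α e^{-2x}) ∂_x + β e^{t-x} ∂_u`
satisfy `[L₀,L₁] = -L₁`, `[L₀,L₋₁] = L₋₁`, `[L₁,L₋₁] = 2 L₀`. -/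
theorem lemma1_second_realization (α β : ℝ) (hα : α = 0 ∨ α = 1 ∨ α = -1)
    (hβ : β = 0 ∨ β = 1) (φ : ℝ → ℝ) (hφ : ContDiff ℝ (⊤ : ℕ∞) φ)
    (L0 L1 Lm1 : VF3)
    (hL0 : L0 = ⟨fun _ _ _ => 1, fun _ _ _ => 0, fun _ _ _ => 0⟩)
    (hL1 : L1 = ⟨fun t _ _ => Real.exp (-t), fun t _ _ => Real.exp (-t), fun _ _ _ => 0⟩)
    (hLm1 : Lm1 = ⟨fun t x _ => Real.exp t * (1 + α * Real.exp (-2 * x)),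
      fun t x u => Real.exp t * (-1 + φ u * Real.exp (-x) + α * Real.exp (-2 * x)),
      fun t x _ => β * Real.exp (t - x)⟩) :
    VF3.bracket L0 L1 = VF3.smul (-1) L1 ∧
    VF3.bracket L0 Lm1 = Lm1 ∧
    VF3.bracket L1 Lm1 = VF3.smul 2 L0 := by
  subst hL0 hL1 hLm1
  refine ⟨?_, ?_, ?_⟩ <;>
  · simp only [VF3.bracket, VF3.app, VF3.smul, VF3.mk.injEq, pt, px, pu]
    refine ⟨funext fun t => funext fun x => funext fun u => ?_,
            funext fun t => funext fun x => funext fun u => ?_,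
            funext fun t => funext fun x => funext fun u => ?_⟩ <;>
    · simp only [deriv_const', d_exp_neg, d_exp_mul, d_tau_x, d_xi_x, d_eta_t, d_eta_x]
      ring_nf
      all_goals simp [← Real.exp_add]
      all_goals ring_nf
end
end

section
/- Let L_0 = ∂_t and L_1 = e^{-t} ∂_t be vector fields on ℝ³ (coordinates (t,x,u)). If Y = τ∂_t + ξ∂_x + η∂_u is a smooth vector field on ℝ³ satisfying [L_0, Y] = Y and [L_1, Y] = 2 L_0, then Y = e^{t} ∂_t, i.e. τ(t,x,u) = e^{t}, ξ = 0, η = 0. (Uniqueness of L_{-1} in Case 1 of the proof of Lemma 1.) -/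
noncomputable section

/-- Case 1 of the proof of Lemma 1: given `L₀ = ∂_t` and `L₁ = e^{-t} ∂_t` on ℝ³,
any smooth vector field `Y` with `[L₀,Y] = Y` and `[L₁,Y] = 2 L₀` equals `e^t ∂_t`. -/
theorem uniqueness_of_Lminus1_case1 (L0 L1 Y : VF3)
    (hL0 : L0 = ⟨fun _ _ _ => 1, fun _ _ _ => 0, fun _ _ _ => 0⟩)
    (hL1 : L1 = ⟨fun t _ _ => Real.exp (-t), fun _ _ _ => 0, fun _ _ _ => 0⟩)
    (hτ : Smooth3 Y.tau) (hξ : Smooth3 Y.xi) (hη : Smooth3 Y.eta)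
    (h1 : VF3.bracket L0 Y = Y)
    (h2 : VF3.bracket L1 Y = VF3.smul 2 L0) :
    Y = ⟨fun t _ _ => Real.exp t, fun _ _ _ => 0, fun _ _ _ => 0⟩ := by
  subst hL0 hL1
  have hexp : ∀ t : ℝ, deriv (fun s => Real.exp (-s)) t = -Real.exp (-t) := by
    intro t
    have h : HasDerivAt (fun s : ℝ => Real.exp (-s)) (Real.exp (-t) * (-1)) t :=
      (Real.hasDerivAt_exp (-t)).comp t ((hasDerivAt_id t).neg)
    simpa using h.deriv
  have e1t : ∀ t x u : ℝ, pt Y.tau t x u = Y.tau t x u := by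
    intro t x u
    have := congrFun (congrFun (congrFun (congrArg VF3.tau h1) t) x) u
    simpa [VF3.bracket, VF3.app, pt, px, pu] using this
  have e1x : ∀ t x u : ℝ, pt Y.xi t x u = Y.xi t x u := by
    intro t x u
    have := congrFun (congrFun (congrFun (congrArg VF3.xi h1) t) x) u
    simpa [VF3.bracket, VF3.app, pt, px, pu] using this
  have e1u : ∀ t x u : ℝ, pt Y.eta t x u = Y.eta t x u := by
    intro t x u
    have := congrFun (congrFun (congrFun (congrArg VF3.eta h1) t) x) u
    simpa [VF3.bracket, VF3.app, pt, px, pu] using this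
  have e2t : ∀ t x u : ℝ, Real.exp (-t) * pt Y.tau t x u + Y.tau t x u * Real.exp (-t) = 2 := by
    intro t x u
    have := congrFun (congrFun (congrFun (congrArg VF3.tau h2) t) x) u
    simp only [VF3.bracket, VF3.app, VF3.smul, pt, px, pu] at this
    simp [hexp] at this
    simp only [pt]
    linarith [this]
  have e2x : ∀ t x u : ℝ, Real.exp (-t) * pt Y.xi t x u = 0 := by
    intro t x u
    have := congrFun (congrFun (congrFun (congrArg VF3.xi h2) t) x) u
    simp only [VF3.bracket, VF3.app, VF3.smul, pt, px, pu] at this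
    simpa [hexp, pt] using this
  have e2u : ∀ t x u : ℝ, Real.exp (-t) * pt Y.eta t x u = 0 := by
    intro t x u
    have := congrFun (congrFun (congrFun (congrArg VF3.eta h2) t) x) u
    simp only [VF3.bracket, VF3.app, VF3.smul, pt, px, pu] at this
    simpa [hexp, pt] using this
  have htau : ∀ t x u : ℝ, Y.tau t x u = Real.exp t := by
    intro t x u
    have h := e2t t x u
    rw [e1t t x u] at h
    have hne : Real.exp (-t) ≠ 0 := Real.exp_ne_zero _
    have : Y.tau t x u * Real.exp (-t) = 1 := by linarith
    have := congrArg (· * Real.exp t) this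
    simpa [mul_assoc, ← Real.exp_add] using this
  have hxi : ∀ t x u : ℝ, Y.xi t x u = 0 := by
    intro t x u
    have h := e2x t x u
    rw [e1x t x u] at h
    exact (mul_eq_zero.mp h).resolve_left (Real.exp_ne_zero _)
  have heta : ∀ t x u : ℝ, Y.eta t x u = 0 := by
    intro t x u
    have h := e2u t x u
    rw [e1u t x u] at h
    exact (mul_eq_zero.mp h).resolve_left (Real.exp_ne_zero _)
  obtain ⟨τ, ξ, η⟩ := Y
  simp only [VF3.mk.injEq]
  refine ⟨?_, ?_, ?_⟩ <;> funext t x u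
  · exact htau t x u
  · exact hxi t x u
  · exact heta t x u
end
end

section
/- Let L_0 = ∂_t, L_1 = e^{-t} ∂_t, L_{-1} = e^{t} ∂_t be vector fields on ℝ³ (coordinates (t,x,u)). If X and Y are smooth vector fields on ℝ³ satisfying [L_0, X] = −2X, [L_{-1}, X] = −3 L_1, [L_0, Y] = 2Y, and [L_1, Y] = 3 L_{-1}, then necessarily X = e^{-2t} ∂_t and Y = e^{2t} ∂_t. (Case 1 in the proof of Theorem 1: the realization 𝔚₁ is forced once L_0, L_1, L_{-1} have the form of the first realization of Lemma 1.) -/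
noncomputable section

/-- Case 1 of the proof of Theorem 1: with `L₀ = ∂_t`, `L₁ = e^{-t} ∂_t`, `L₋₁ = e^t ∂_t`
on ℝ³, any smooth vector fields `X, Y` satisfying `[L₀,X] = -2X`, `[L₋₁,X] = -3L₁`,
`[L₀,Y] = 2Y`, `[L₁,Y] = 3L₋₁` are necessarily `X = e^{-2t} ∂_t` and `Y = e^{2t} ∂_t`. -/
theorem case1_forces_W1 (L0 L1 Lm1 X Y : VF3)
    (hL0 : L0 = ⟨fun _ _ _ => 1, fun _ _ _ => 0, fun _ _ _ => 0⟩)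
    (hL1 : L1 = ⟨fun t _ _ => Real.exp (-t), fun _ _ _ => 0, fun _ _ _ => 0⟩)
    (hLm1 : Lm1 = ⟨fun t _ _ => Real.exp t, fun _ _ _ => 0, fun _ _ _ => 0⟩)
    (hXτ : Smooth3 X.tau) (hXξ : Smooth3 X.xi) (hXη : Smooth3 X.eta)
    (hYτ : Smooth3 Y.tau) (hYξ : Smooth3 Y.xi) (hYη : Smooth3 Y.eta)
    (h1 : VF3.bracket L0 X = VF3.smul (-2) X)
    (h2 : VF3.bracket Lm1 X = VF3.smul (-3) L1)
    (h3 : VF3.bracket L0 Y = VF3.smul 2 Y)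
    (h4 : VF3.bracket L1 Y = VF3.smul 3 Lm1) :
    X = ⟨fun t _ _ => Real.exp (-2 * t), fun _ _ _ => 0, fun _ _ _ => 0⟩ ∧
    Y = ⟨fun t _ _ => Real.exp (2 * t), fun _ _ _ => 0, fun _ _ _ => 0⟩ := by

  subst hL0 hL1 hLm1
  have dexp : ∀ t : ℝ, deriv (fun s : ℝ => Real.exp s) t = Real.exp t := by
    simp [Real.deriv_exp]
  have dexpneg : ∀ t : ℝ, deriv (fun s : ℝ => Real.exp (-s)) t = -Real.exp (-t) := by
    intro t
    have h := ((hasDerivAt_neg t).exp).deriv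
    simpa using h
  -- component equations
  have e1τ : ∀ t x u : ℝ, pt X.tau t x u = -2 * X.tau t x u := by
    intro t x u
    have h := congrFun (congrFun (congrFun (congrArg VF3.tau h1) t) x) u
    simpa [VF3.bracket, VF3.smul, VF3.app, pt, px, pu] using h
  have e1ξ : ∀ t x u : ℝ, pt X.xi t x u = -2 * X.xi t x u := by
    intro t x u
    have h := congrFun (congrFun (congrFun (congrArg VF3.xi h1) t) x) u
    simpa [VF3.bracket, VF3.smul, VF3.app, pt, px, pu] using h
  have e1η : ∀ t x u : ℝ, pt X.eta t x u = -2 * X.eta t x u := by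
    intro t x u
    have h := congrFun (congrFun (congrFun (congrArg VF3.eta h1) t) x) u
    simpa [VF3.bracket, VF3.smul, VF3.app, pt, px, pu] using h
  have e2τ : ∀ t x u : ℝ, Real.exp t * pt X.tau t x u - X.tau t x u * Real.exp t
      = -3 * Real.exp (-t) := by
    intro t x u
    have h := congrFun (congrFun (congrFun (congrArg VF3.tau h2) t) x) u
    simpa [VF3.bracket, VF3.smul, VF3.app, pt, px, pu, dexp] using h
  have e2ξ : ∀ t x u : ℝ, Real.exp t * pt X.xi t x u = 0 := by
    intro t x u
    have h := congrFun (congrFun (congrFun (congrArg VF3.xi h2) t) x) u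
    simpa [VF3.bracket, VF3.smul, VF3.app, pt, px, pu] using h
  have e2η : ∀ t x u : ℝ, Real.exp t * pt X.eta t x u = 0 := by
    intro t x u
    have h := congrFun (congrFun (congrFun (congrArg VF3.eta h2) t) x) u
    simpa [VF3.bracket, VF3.smul, VF3.app, pt, px, pu] using h
  have e3τ : ∀ t x u : ℝ, pt Y.tau t x u = 2 * Y.tau t x u := by
    intro t x u
    have h := congrFun (congrFun (congrFun (congrArg VF3.tau h3) t) x) u
    simpa [VF3.bracket, VF3.smul, VF3.app, pt, px, pu] using h
  have e3ξ : ∀ t x u : ℝ, pt Y.xi t x u = 2 * Y.xi t x u := by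
    intro t x u
    have h := congrFun (congrFun (congrFun (congrArg VF3.xi h3) t) x) u
    simpa [VF3.bracket, VF3.smul, VF3.app, pt, px, pu] using h
  have e3η : ∀ t x u : ℝ, pt Y.eta t x u = 2 * Y.eta t x u := by
    intro t x u
    have h := congrFun (congrFun (congrFun (congrArg VF3.eta h3) t) x) u
    simpa [VF3.bracket, VF3.smul, VF3.app, pt, px, pu] using h
  have e4τ : ∀ t x u : ℝ, Real.exp (-t) * pt Y.tau t x u - Y.tau t x u * (-Real.exp (-t))
      = 3 * Real.exp t := by
    intro t x u
    have h := congrFun (congrFun (congrFun (congrArg VF3.tau h4) t) x) u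
    simpa [VF3.bracket, VF3.smul, VF3.app, pt, px, pu, dexpneg] using h
  have e4ξ : ∀ t x u : ℝ, Real.exp (-t) * pt Y.xi t x u = 0 := by
    intro t x u
    have h := congrFun (congrFun (congrFun (congrArg VF3.xi h4) t) x) u
    simpa [VF3.bracket, VF3.smul, VF3.app, pt, px, pu] using h
  have e4η : ∀ t x u : ℝ, Real.exp (-t) * pt Y.eta t x u = 0 := by
    intro t x u
    have h := congrFun (congrFun (congrFun (congrArg VF3.eta h4) t) x) u
    simpa [VF3.bracket, VF3.smul, VF3.app, pt, px, pu] using h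
  have hexp : ∀ t : ℝ, Real.exp t ≠ 0 := fun t => Real.exp_ne_zero t
  constructor
  · cases X with
    | mk τ ξ η =>
      simp only [VF3.mk.injEq]
      refine ⟨?_, ?_, ?_⟩
      · funext t x u
        have h2 := e2τ t x u
        rw [e1τ t x u] at h2
        have key : τ t x u * Real.exp t = Real.exp (-2 * t) * Real.exp t := by
          rw [← Real.exp_add]
          have : -2 * t + t = -t := by ring
          rw [this]
          nlinarith [h2]
        exact mul_right_cancel₀ (hexp t) key
      · funext t x u
        have h2 := e2ξ t x u
        rw [e1ξ t x u] at h2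
        have := mul_eq_zero.mp h2
        rcases this with h | h
        · exact absurd h (hexp t)
        · linarith
      · funext t x u
        have h2 := e2η t x u
        rw [e1η t x u] at h2
        rcases mul_eq_zero.mp h2 with h | h
        · exact absurd h (hexp t)
        · linarith
  · cases Y with
    | mk τ ξ η =>
      simp only [VF3.mk.injEq]
      refine ⟨?_, ?_, ?_⟩
      · funext t x u
        have h4' := e4τ t x u
        rw [e3τ t x u] at h4'
        have key : τ t x u * Real.exp (-t) = Real.exp (2 * t) * Real.exp (-t) := by
          rw [← Real.exp_add]
          have : 2 * t + -t = t := by ring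
          rw [this]
          nlinarith [h4']
        exact mul_right_cancel₀ (hexp (-t)) key
      · funext t x u
        have h4' := e4ξ t x u
        rw [e3ξ t x u] at h4'
        rcases mul_eq_zero.mp h4' with h | h
        · exact absurd h (hexp (-t))
        · linarith
      · funext t x u
        have h4' := e4η t x u
        rw [e3η t x u] at h4'
        rcases mul_eq_zero.mp h4' with h | h
        · exact absurd h (hexp (-t))
        · linarith
end
end

section
/- Let α ∈ {0, 1, −1}. For each integer n define the vector field on ℝ² (coordinates (t,x)): L_n = e^{-nt} ∂_t + e^{-nt} [ n + (1/2) n(n−1) α e^{-x} ] ∂_x. Then for all integers m, n one has [L_m, L_n] = (m − n) L_{m+n}. (Realization 𝔚₂ of the Witt algebra from Theorem 1.) -/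
noncomputable section

/-- Partial derivative of `f : ℝ² → ℝ` (curried) in the first variable `t`. -/
def qt (f : ℝ → ℝ → ℝ) (t x : ℝ) : ℝ := deriv (fun s => f s x) t

/-- Partial derivative in the second variable `x`. -/
def qx (f : ℝ → ℝ → ℝ) (t x : ℝ) : ℝ := deriv (fun s => f t s) x

/-- A vector field `τ ∂_t + ξ ∂_x` on ℝ² with coordinates `(t,x)`. -/
structure VF2 where
  tau : ℝ → ℝ → ℝ
  xi  : ℝ → ℝ → ℝ

/-- Action of a vector field on a function: `X(F) = τ F_t + ξ F_x`. -/
def VF2.app (X : VF2) (F : ℝ → ℝ → ℝ) (t x : ℝ) : ℝ :=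
  X.tau t x * qt F t x + X.xi t x * qx F t x

/-- Lie bracket of vector fields on ℝ². -/
def VF2.bracket (X Y : VF2) : VF2 where
  tau := fun t x => X.app Y.tau t x - Y.app X.tau t x
  xi  := fun t x => X.app Y.xi t x - Y.app X.xi t x

/-- Scalar multiple of a vector field. -/
def VF2.smul (c : ℝ) (X : VF2) : VF2 where
  tau := fun t x => c * X.tau t x
  xi  := fun t x => c * X.xi t x

/-- The vector fields of the realization 𝔚₂:
`L n = e^{-nt} ∂_t + e^{-nt}[n + (1/2) n (n-1) α e^{-x}] ∂_x`. -/
def W2 (α : ℝ) (n : ℤ) : VF2 where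
  tau := fun t _ => Real.exp (-(n : ℝ) * t)
  xi  := fun t x => Real.exp (-(n : ℝ) * t) *
    ((n : ℝ) + (1 / 2) * (n : ℝ) * ((n : ℝ) - 1) * α * Real.exp (-x))

/-!
Each `L_n` has the shape `e^{-nt} (∂_t + g_n(x) ∂_x)`. For fields of this shape the
exponentials multiply, and the bracket acts on the profiles by
`(g_k, g_l) ↦ k g_k - l g_l + g_k g_l' - g_l g_k'`. For `g_k = k + ½ k (k - 1) α e^{-x}` the
terms quadratic in `α e^{-x}` cancel and the linear ones add up to `(k - l) g_{k+l}`.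
-/

open Real

lemma deriv_exp_neg_mul (k t : ℝ) :
    deriv (fun s => exp (-k * s)) t = -k * exp (-k * t) := by
  have h : HasDerivAt (fun s => exp (-k * s)) (exp (-k * t) * -k) t := by
    simpa using ((hasDerivAt_id t).const_mul (-k)).exp
  rw [h.deriv, mul_comm]

namespace VF2

def ofExp (k c : ℝ) (g : ℝ → ℝ) : VF2 where
  tau := fun t _ => c * exp (-k * t)
  xi := fun t x => exp (-k * t) * g x

lemma app_ofExp_tau (k c l d : ℝ) (g h : ℝ → ℝ) (t x : ℝ) :
    (ofExp k c g).app (ofExp l d h).tau t x = -l * c * d * exp (-(k + l) * t) := by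
  simp only [app, ofExp, qt, qx, deriv_const_mul_field', deriv_exp_neg_mul, deriv_const']
  rw [show -(k + l) * t = -k * t + -l * t by ring, exp_add]
  ring

lemma app_ofExp_xi (k c l d : ℝ) (g h : ℝ → ℝ) (t x : ℝ) :
    (ofExp k c g).app (ofExp l d h).xi t x
      = exp (-(k + l) * t) * (-l * c * h x + g x * deriv h x) := by
  simp only [app, ofExp, qt, qx, deriv_const_mul_field', deriv_mul_const_field',
    deriv_exp_neg_mul]
  rw [show -(k + l) * t = -k * t + -l * t by ring, exp_add]
  ring

/-- No differentiability of `g, h` is needed: `deriv (fun x => a * h x) = a * deriv h` holds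
unconditionally. -/
theorem bracket_ofExp (k c l d : ℝ) (g h : ℝ → ℝ) :
    bracket (ofExp k c g) (ofExp l d h)
      = ofExp (k + l) ((k - l) * c * d)
          (fun x => k * d * g x - l * c * h x + g x * deriv h x - h x * deriv g x) := by
  unfold bracket
  simp only [app_ofExp_tau, app_ofExp_xi, add_comm l k]
  simp only [ofExp, mk.injEq]
  constructor <;> funext t x <;> ring

lemma smul_ofExp (r k c : ℝ) (g : ℝ → ℝ) :
    smul r (ofExp k c g) = ofExp k (r * c) (fun x => r * g x) := by
  simp only [smul, ofExp, mk.injEq]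
  constructor <;> funext t x <;> ring

end VF2

def wittProfile (α k x : ℝ) : ℝ := k + 1 / 2 * k * (k - 1) * α * exp (-x)

lemma deriv_wittProfile (α k x : ℝ) :
    deriv (wittProfile α k) x = -(1 / 2 * k * (k - 1) * α * exp (-x)) := by
  have h : HasDerivAt (wittProfile α k) (1 / 2 * k * (k - 1) * α * (exp (-x) * -1)) x :=
    (((hasDerivAt_id x).neg.exp).const_mul (1 / 2 * k * (k - 1) * α)).const_add k
  rw [h.deriv]
  ring

lemma wittProfile_bracket (α k l x : ℝ) :
    k * wittProfile α k x - l * wittProfile α l x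
        + wittProfile α k x * deriv (wittProfile α l) x
        - wittProfile α l x * deriv (wittProfile α k) x
      = (k - l) * wittProfile α (k + l) x := by
  simp only [deriv_wittProfile, wittProfile]
  ring

lemma W2_eq_ofExp (α : ℝ) (n : ℤ) : W2 α n = VF2.ofExp n 1 (wittProfile α n) := by
  simp only [W2, VF2.ofExp, wittProfile, one_mul]

theorem witt_realization_W2_general (α : ℝ) (m n : ℤ) :
    VF2.bracket (W2 α m) (W2 α n) = VF2.smul ((m : ℝ) - (n : ℝ)) (W2 α (m + n)) := by
  rw [W2_eq_ofExp, W2_eq_ofExp, W2_eq_ofExp, VF2.bracket_ofExp, VF2.smul_ofExp, Int.cast_add]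
  simp only [mul_one, wittProfile_bracket]

/-- Realization 𝔚₂ of the Witt algebra: `[L m, L n] = (m - n) L (m + n)`. -/
theorem witt_realization_W2 (α : ℝ) (hα : α = 0 ∨ α = 1 ∨ α = -1) (m n : ℤ) :
    VF2.bracket (W2 α m) (W2 α n) = VF2.smul ((m : ℝ) - (n : ℝ)) (W2 α (m + n)) :=
  witt_realization_W2_general α m n
end
end

section
/- Let ε ∈ {1, −1}. For each integer n define on the open set Ω = {(t,x) ∈ ℝ² : e^x + ε ≠ 0} the vector field L_n = e^{-nt+(n−1)x} (e^{x} + ε n)(e^{x} + ε)^{−n} ∂_t + n e^{-nt+(n−1)x} (e^{x} + ε)^{1−n} ∂_x, where the exponents −n and 1−n are integer powers. Then for all integers m, n one has [L_m, L_n] = (m − n) L_{m+n} at every point of Ω. (Realization 𝔚₅ of the Witt algebra from Theorem 1.) -/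
noncomputable section

/-- The vector fields of the realization 𝔚₅ (defined on `Ω = {e^x + ε ≠ 0}`):
`L n = e^{-nt+(n-1)x}(e^x + εn)(e^x + ε)^{-n} ∂_t + n e^{-nt+(n-1)x}(e^x + ε)^{1-n} ∂_x`. -/
def W5 (ε : ℝ) (n : ℤ) : VF2 where
  tau := fun t x => Real.exp (-(n : ℝ) * t + ((n : ℝ) - 1) * x) *
    (Real.exp x + ε * (n : ℝ)) * (Real.exp x + ε) ^ (-n : ℤ)
  xi  := fun t x => (n : ℝ) * Real.exp (-(n : ℝ) * t + ((n : ℝ) - 1) * x) *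
    (Real.exp x + ε) ^ (1 - n : ℤ)

/-!
Both coefficients of `L k` carry the factor `E k = e^{-kt+(k-1)x}`, so `∂_t` acts on them as
multiplication by `-k`. With `v = e^x + ε`, the `x`-derivatives collapse to
`∂_x τ_k = ε² k (k-1) E_k v^{-k-1}` and `∂_x ξ_k = ε k (k-1) E_k v^{-k}`. Since
`E_{m+n} = E_m E_n e^x`, both components of the bracket relation then reduce to polynomial
identities in `e^x`, `ε`, `m`, `n`.
-/

lemma zpow_one_sub₀ {G₀ : Type*} [GroupWithZero G₀] {a : G₀} (ha : a ≠ 0) (k : ℤ) :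
    a ^ (1 - k) = a * a ^ (-k) := by
  rw [← zpow_one_add₀ ha, sub_eq_add_neg]

lemma hasDerivAt_exp_add_const_zpow (ε : ℝ) (j : ℤ) {x : ℝ} (hx : Real.exp x + ε ≠ 0) :
    HasDerivAt (fun y => (Real.exp y + ε) ^ j) (j * (Real.exp x + ε) ^ (j - 1) * Real.exp x) x := by
  exact (hasDerivAt_zpow j _ (Or.inl hx)).comp x ((Real.hasDerivAt_exp x).add_const ε)

lemma hasDerivAt_exp_const_add_mul (c a x : ℝ) :
    HasDerivAt (fun y => Real.exp (c + a * y)) (Real.exp (c + a * x) * a) x := by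
  simpa using (((hasDerivAt_id x).const_mul a).const_add c).exp

namespace W5

variable (ε : ℝ) (k : ℤ) {t x : ℝ}

lemma qt_tau : qt (W5 ε k).tau t x = -k * (W5 ε k).tau t x := by
  have h := ((((hasDerivAt_id t).const_mul (-(k : ℝ))).add_const (((k : ℝ) - 1) * x)).exp.mul_const
    (Real.exp x + ε * k)).mul_const ((Real.exp x + ε) ^ (-k))
  refine h.deriv.trans ?_
  simp only [W5, id]
  ring

lemma qt_xi : qt (W5 ε k).xi t x = -k * (W5 ε k).xi t x := by
  have h := ((((hasDerivAt_id t).const_mul (-(k : ℝ))).add_const (((k : ℝ) - 1) * x)).exp.const_mul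
    (k : ℝ)).mul_const ((Real.exp x + ε) ^ (1 - k))
  refine h.deriv.trans ?_
  simp only [W5, id]
  ring

lemma qx_tau (hx : Real.exp x + ε ≠ 0) :
    qx (W5 ε k).tau t x = ε ^ 2 * k * (k - 1) * Real.exp (-(k : ℝ) * t + ((k : ℝ) - 1) * x) *
      (Real.exp x + ε) ^ (-k - 1) := by
  have h := ((hasDerivAt_exp_const_add_mul (-(k : ℝ) * t) ((k : ℝ) - 1) x).mul
    ((Real.hasDerivAt_exp x).add_const (ε * k))).mul (hasDerivAt_exp_add_const_zpow ε (-k) hx)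
  have hv : (Real.exp x + ε) ^ (-k) = (Real.exp x + ε) ^ (-k - 1) * (Real.exp x + ε) := by
    rw [← zpow_add_one₀ hx, sub_add_cancel]
  refine h.deriv.trans ?_
  rw [Pi.mul_apply, hv]
  push_cast
  ring

lemma qx_xi (hx : Real.exp x + ε ≠ 0) :
    qx (W5 ε k).xi t x = ε * k * (k - 1) * Real.exp (-(k : ℝ) * t + ((k : ℝ) - 1) * x) *
      (Real.exp x + ε) ^ (-k) := by
  have h := ((hasDerivAt_exp_const_add_mul (-(k : ℝ) * t) ((k : ℝ) - 1) x).const_mul (k : ℝ)).mul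
    (hasDerivAt_exp_add_const_zpow ε (1 - k) hx)
  refine h.deriv.trans ?_
  rw [sub_sub_cancel_left, zpow_one_sub₀ hx]
  push_cast
  ring

end W5

theorem witt_realization_W5_general (ε : ℝ) (m n : ℤ)
    (t x : ℝ) (hx : Real.exp x + ε ≠ 0) :
    (VF2.bracket (W5 ε m) (W5 ε n)).tau t x
      = ((m : ℝ) - (n : ℝ)) * (W5 ε (m + n)).tau t x ∧
    (VF2.bracket (W5 ε m) (W5 ε n)).xi t x
      = ((m : ℝ) - (n : ℝ)) * (W5 ε (m + n)).xi t x := by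
  have hweight : Real.exp (-((m + n : ℤ) : ℝ) * t + (((m + n : ℤ) : ℝ) - 1) * x)
      = Real.exp (-(m : ℝ) * t + ((m : ℝ) - 1) * x) *
        Real.exp (-(n : ℝ) * t + ((n : ℝ) - 1) * x) * Real.exp x := by
    rw [← Real.exp_add, ← Real.exp_add]
    congr 1
    push_cast
    ring
  simp only [VF2.bracket, VF2.app, W5.qt_tau, W5.qt_xi, W5.qx_tau ε _ hx, W5.qx_xi ε _ hx,
    zpow_sub_one₀ hx]
  simp only [W5, hweight, neg_add, zpow_add₀ hx, zpow_one_sub₀ hx]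
  push_cast
  constructor
  · field_simp
    ring
  · ring

/-- Realization 𝔚₅ of the Witt algebra: on `Ω = {(t,x) : e^x + ε ≠ 0}` one has
`[L m, L n] = (m - n) L (m + n)`. -/
theorem witt_realization_W5 (ε : ℝ) (hε : ε = 1 ∨ ε = -1) (m n : ℤ)
    (t x : ℝ) (hx : Real.exp x + ε ≠ 0) :
    (VF2.bracket (W5 ε m) (W5 ε n)).tau t x
      = ((m : ℝ) - (n : ℝ)) * (W5 ε (m + n)).tau t x ∧
    (VF2.bracket (W5 ε m) (W5 ε n)).xi t x
      = ((m : ℝ) - (n : ℝ)) * (W5 ε (m + n)).xi t x :=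
  witt_realization_W5_general ε m n t x hx
end
end

section
/- Let γ ∈ {1, −1}. For each integer n define on the open set Ω = {(t,x) ∈ ℝ² : e^x ≠ γ} the vector field L_n = e^{-nt} ∂_t + γ e^{-nt} [ e^{nx} − (e^{x} − γ)^{n} ] (e^{x} − γ)^{1−n} ∂_x, where the exponents n and 1−n are integer powers. Then for all integers m, n one has [L_m, L_n] = (m − n) L_{m+n} at every point of Ω. (Realization 𝔚₆ of the Witt algebra from Theorem 1.) -/
noncomputable section

/-- The vector fields of the realization 𝔚₆ (defined on `Ω = {e^x ≠ γ}`):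
`L n = e^{-nt} ∂_t + γ e^{-nt}[e^{nx} - (e^x - γ)^n](e^x - γ)^{1-n} ∂_x`. -/
def W6 (γ : ℝ) (n : ℤ) : VF2 where
  tau := fun t _ => Real.exp (-(n : ℝ) * t)
  xi  := fun t x => γ * Real.exp (-(n : ℝ) * t) *
    (Real.exp ((n : ℝ) * x) - (Real.exp x - γ) ^ (n : ℤ)) *
    (Real.exp x - γ) ^ (1 - n : ℤ)

/-! Every `L_n` has the form `e^{-nt} (∂_t + f_n(x) ∂_x)`, and for such fields the Witt relation
reduces to the profile identity `m f_m - n f_n + f_m f_n' - f_n f_m' = (m - n) f_{m+n}`.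
With `w = e^x`, `u = w - γ` and `r = w / u` one has `f_n = γ u (r^n - 1)` and
`f_n' = γ (r^n (w - nγ) - w)`; since `r^{m+n} = r^m r^n`, the profile identity becomes a
polynomial identity in `r^m`, `r^n` which holds exactly because `γ^3 = γ`.
Below, `r^k` is written `e^{kx} / u^k`. -/

open Real

theorem deriv_exp_neg_mul_mul_const (a c t : ℝ) :
    deriv (fun s => exp (-a * s) * c) t = -a * exp (-a * t) * c := by
  have := (((hasDerivAt_id t).const_mul (-a)).exp).mul_const c
  simpa [mul_comm] using this.deriv

namespace VF2

def expTimes (a : ℝ) (f : ℝ → ℝ) : VF2 where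
  tau t _ := exp (-a * t)
  xi t x := exp (-a * t) * f x

theorem bracket_expTimes_tau (a b : ℝ) (f g : ℝ → ℝ) (t x : ℝ) :
    (bracket (expTimes a f) (expTimes b g)).tau t x = (a - b) * exp (-(a + b) * t) := by
  have ha := deriv_exp_neg_mul_mul_const a 1 t
  have hb := deriv_exp_neg_mul_mul_const b 1 t
  simp only [mul_one] at ha hb
  simp only [bracket, app, expTimes, qt, qx, ha, hb, deriv_const', mul_zero, add_zero]
  rw [show -(a + b) * t = -a * t + -b * t by ring, exp_add]
  ring

theorem bracket_expTimes_xi (a b : ℝ) (f g : ℝ → ℝ) (t x : ℝ) :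
    (bracket (expTimes a f) (expTimes b g)).xi t x = exp (-(a + b) * t) *
      (a * f x - b * g x + f x * deriv g x - g x * deriv f x) := by
  simp only [bracket, app, expTimes, qt, qx, deriv_exp_neg_mul_mul_const, deriv_const_mul_field]
  rw [show -(a + b) * t = -a * t + -b * t by ring, exp_add]
  ring

end VF2

def w6Profile (γ : ℝ) (k : ℤ) (x : ℝ) : ℝ :=
  γ * (exp (k * x) - (exp x - γ) ^ k) * (exp x - γ) ^ (1 - k)

theorem W6_eq_expTimes (γ : ℝ) (k : ℤ) : W6 γ k = VF2.expTimes k (w6Profile γ k) := by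
  simp only [W6, VF2.expTimes, w6Profile, VF2.mk.injEq, true_and]
  funext t x
  ring

theorem w6Profile_eq {γ x : ℝ} (hx : exp x ≠ γ) (k : ℤ) :
    w6Profile γ k x = γ * (exp x - γ) * (exp (k * x) / (exp x - γ) ^ k - 1) := by
  have hu : exp x - γ ≠ 0 := sub_ne_zero.mpr hx
  rw [w6Profile, zpow_sub₀ hu, zpow_one]
  field_simp

theorem hasDerivAt_w6Profile {γ x : ℝ} (hx : exp x ≠ γ) (k : ℤ) :
    HasDerivAt (w6Profile γ k)
      (γ * (exp (k * x) / (exp x - γ) ^ k * (exp x - k * γ) - exp x)) x := by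
  have hu : exp x - γ ≠ 0 := sub_ne_zero.mpr hx
  have hbase : HasDerivAt (fun y => exp y - γ) (exp x) x := (hasDerivAt_exp x).sub_const γ
  have hpow (j : ℤ) :
      HasDerivAt (fun y => (exp y - γ) ^ j) (j * (exp x - γ) ^ (j - 1) * exp x) x := by
    simpa [Function.comp_def] using (hasDerivAt_zpow j _ (Or.inl hu)).comp x hbase
  have hexp : HasDerivAt (fun y => exp (k * y)) (exp (k * x) * k) x := by
    simpa using ((hasDerivAt_id x).const_mul (k : ℝ)).exp
  refine (((hexp.sub (hpow k)).const_mul γ).mul (hpow (1 - k))).congr_deriv ?_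
  rw [Pi.sub_apply, show (1 - k - 1 : ℤ) = -k by ring, zpow_neg, zpow_sub_one₀ hu, zpow_sub₀ hu,
    zpow_one]
  push_cast
  field_simp
  ring

theorem witt_identity_of_sq_eq_one {R : Type*} [CommRing R] {γ : R} (hγ : γ ^ 2 = 1)
    (m n u w a b : R) :
    m * (γ * u * (a - 1)) - n * (γ * u * (b - 1))
      + γ * u * (a - 1) * (γ * (b * (w - n * γ) - w))
      - γ * u * (b - 1) * (γ * (a * (w - m * γ) - w))
      = (m - n) * (γ * u * (a * b - 1)) := by
  linear_combination (u * (m - n) * a * b + u * n * b - u * m * a) * γ * hγ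

/-- Realization 𝔚₆ of the Witt algebra: on `Ω = {(t,x) : e^x ≠ γ}` one has
`[L m, L n] = (m - n) L (m + n)`. -/
theorem witt_realization_W6 (γ : ℝ) (hγ : γ = 1 ∨ γ = -1) (m n : ℤ)
    (t x : ℝ) (hx : Real.exp x ≠ γ) :
    (VF2.bracket (W6 γ m) (W6 γ n)).tau t x
      = ((m : ℝ) - (n : ℝ)) * (W6 γ (m + n)).tau t x ∧
    (VF2.bracket (W6 γ m) (W6 γ n)).xi t x
      = ((m : ℝ) - (n : ℝ)) * (W6 γ (m + n)).xi t x := by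
  have hγ2 : γ ^ 2 = 1 := by rcases hγ with rfl | rfl <;> norm_num
  have hu : exp x - γ ≠ 0 := sub_ne_zero.mpr hx
  have hratio : exp (((m + n : ℤ) : ℝ) * x) / (exp x - γ) ^ (m + n)
      = exp (m * x) / (exp x - γ) ^ m * (exp (n * x) / (exp x - γ) ^ n) := by
    rw [Int.cast_add, add_mul, exp_add, zpow_add₀ hu, mul_div_mul_comm]
  simp only [W6_eq_expTimes, VF2.bracket_expTimes_tau, VF2.bracket_expTimes_xi]
  simp only [VF2.expTimes]
  refine ⟨by push_cast; ring, ?_⟩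
  rw [(hasDerivAt_w6Profile hx m).deriv, (hasDerivAt_w6Profile hx n).deriv, w6Profile_eq hx m,
    w6Profile_eq hx n, w6Profile_eq hx (m + n), hratio, witt_identity_of_sq_eq_one hγ2]
  push_cast
  ring
end
end
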